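/- (Proposition 2.) For every formula φ(q) in the fixpoint positive fragment with designated atom q, the greatest fixpoint νq.φ exists on every epistemic model M: letting U = ⋃{X ⊆ W | X ⊆ ⟦φ⟧_{M[q↦X]}}, one has U = ⟦φ⟧_{M[q↦U]}. -/
import Mathlib


/-- Formulas of public announcement logic (PAL):
atoms, negation, conjunction, knowledge `K_a φ`, and public announcement `[ψ]φ`. -/
inductive PAL (Agent Atom : Type*) : Type _
  | atom : Atom → PAL Agent Atom
  | neg : PAL Agent Atom → PAL Agent Atom
  | and : PAL Agent Atom → PAL Agent Atom → PAL Agent Atom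
  | know : Agent → PAL Agent Atom → PAL Agent Atom
  | ann : PAL Agent Atom → PAL Agent Atom → PAL Agent Atom

/-- An epistemic model: worlds, an equivalence relation for each agent, and a valuation. -/
structure EpiModel (Agent Atom : Type*) where
  W : Type*
  rel : Agent → W → W → Prop
  isEquiv : ∀ a, Equivalence (rel a)
  val : Atom → Set W

/-- Satisfaction of a PAL formula at a world `w`, relative to the current set `D` of
surviving worlds (announcements restrict `D`); the model proper is never changed, so the
restriction `M|ψ` is represented by shrinking `D`. -/
def PAL.sat {Agent Atom : Type*} (M : EpiModel Agent Atom) :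
    Set M.W → M.W → PAL Agent Atom → Prop
  | _, w, .atom p => w ∈ M.val p
  | D, w, .neg φ => ¬ PAL.sat M D w φ
  | D, w, .and φ ψ => PAL.sat M D w φ ∧ PAL.sat M D w ψ
  | D, w, .know a φ => ∀ v ∈ D, M.rel a w v → PAL.sat M D v φ
  | D, w, .ann ψ φ => PAL.sat M D w ψ → PAL.sat M {v ∈ D | PAL.sat M D v ψ} w φ

/-- The extension `⟦φ⟧_M` of a formula in a model. -/
def sem {Agent Atom : Type*} (M : EpiModel Agent Atom) (φ : PAL Agent Atom) : Set M.W :=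
  {w | PAL.sat M Set.univ w φ}

/-- `M[q↦X]`: the model `M` with the valuation of atom `q` replaced by `X`. -/
def EpiModel.reval {Agent Atom : Type*} (M : EpiModel Agent Atom) (q : Atom)
    (X : Set M.W) : EpiModel Agent Atom where
  W := M.W
  rel := M.rel
  isEquiv := M.isEquiv
  val := fun p => {w | (p = q ∧ w ∈ X) ∨ (p ≠ q ∧ w ∈ M.val p)}

/-- A formula is announcement-free (purely epistemic) if it contains no announcements. -/
def PAL.annFree {Agent Atom : Type*} : PAL Agent Atom → Prop
  | .atom _ => True
  | .neg φ => φ.annFree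
  | .and φ ψ => φ.annFree ∧ ψ.annFree
  | .know _ φ => φ.annFree
  | .ann _ _ => False

mutual
/-- Every occurrence of `q` in the (announcement-free) formula lies under an even number
of negations. -/
def PAL.posIn {Agent Atom : Type*} (q : Atom) : PAL Agent Atom → Prop
  | .atom _ => True
  | .neg φ => PAL.negIn q φ
  | .and φ ψ => PAL.posIn q φ ∧ PAL.posIn q ψ
  | .know _ φ => PAL.posIn q φ
  | .ann _ _ => False

/-- Every occurrence of `q` in the (announcement-free) formula lies under an odd number
of negations. -/
def PAL.negIn {Agent Atom : Type*} (q : Atom) : PAL Agent Atom → Prop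
  | .atom p => p ≠ q
  | .neg φ => PAL.posIn q φ
  | .and φ ψ => PAL.negIn q φ ∧ PAL.negIn q ψ
  | .know _ φ => PAL.negIn q φ
  | .ann _ _ => False
end

/-- `νq.φ` exists on `M`: with `U = ⋃ {X ⊆ W | X ⊆ ⟦φ⟧_{M[q↦X]}}`,
one has `U = ⟦φ⟧_{M[q↦U]}`. -/
def gfpExists {Agent Atom : Type*} (M : EpiModel Agent Atom) (q : Atom)
    (φ : PAL Agent Atom) : Prop :=
  ⋃₀ {X : Set M.W | X ⊆ sem (M.reval q X) φ} =
    sem (M.reval q (⋃₀ {X : Set M.W | X ⊆ sem (M.reval q X) φ})) φ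

/-- The fixpoint positive fragment `φ ::= q | p | ¬p | φ∨ψ | φ∧ψ | K_aφ | [¬ψ]φ`, where
`q` ranges over designated fixpoint variables and `p` over non-designated atoms. -/
inductive FPos (Agent Atom : Type*) (desig : Set Atom) : Type _
  | fvar : (q : Atom) → q ∈ desig → FPos Agent Atom desig
  | atom : (p : Atom) → p ∉ desig → FPos Agent Atom desig
  | natom : (p : Atom) → p ∉ desig → FPos Agent Atom desig
  | or : FPos Agent Atom desig → FPos Agent Atom desig → FPos Agent Atom desig
  | and : FPos Agent Atom desig → FPos Agent Atom desig → FPos Agent Atom desig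
  | know : Agent → FPos Agent Atom desig → FPos Agent Atom desig
  | ann : FPos Agent Atom desig → FPos Agent Atom desig → FPos Agent Atom desig

/-- Reading a formula of the fixpoint positive fragment as a PAL formula, with
`φ ∨ ψ := ¬(¬φ ∧ ¬ψ)` and with `FPos.ann ψ φ` read as the announcement `[¬ψ]φ`. -/
def FPos.toPAL {Agent Atom : Type*} {desig : Set Atom} :
    FPos Agent Atom desig → PAL Agent Atom
  | .fvar q _ => .atom q
  | .atom p _ => .atom p
  | .natom p _ => .neg (.atom p)
  | .or φ ψ => .neg (.and (.neg φ.toPAL) (.neg ψ.toPAL))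
  | .and φ ψ => .and φ.toPAL ψ.toPAL
  | .know a φ => .know a φ.toPAL
  | .ann ψ φ => .ann (.neg ψ.toPAL) φ.toPAL

lemma FPos.mono {Agent Atom : Type*} {desig : Set Atom} (q : Atom) (hq : q ∈ desig)
    (M : EpiModel Agent Atom) :
    ∀ (φ : FPos Agent Atom desig) (X Y D D' : Set M.W) (w : M.W),
      X ⊆ Y → D' ⊆ D →
      PAL.sat (M.reval q X) D w φ.toPAL → PAL.sat (M.reval q Y) D' w φ.toPAL := by
  intro φ
  induction φ with
  | fvar q' h =>
      intro X Y D D' w hXY _ hs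
      simp only [FPos.toPAL, PAL.sat, EpiModel.reval, Set.mem_setOf_eq] at hs ⊢
      rcases hs with ⟨h1, h2⟩ | h; exact Or.inl ⟨h1, hXY h2⟩; exact Or.inr h
  | atom p h =>
      intro X Y D D' w _ _ hs
      simp only [FPos.toPAL, PAL.sat, EpiModel.reval, Set.mem_setOf_eq] at hs ⊢
      rcases hs with ⟨h1, h2⟩ | h'
      · exact absurd hq (h1 ▸ h)
      · exact Or.inr h'
  | natom p h =>
      intro X Y D D' w _ _ hs
      simp only [FPos.toPAL, PAL.sat, EpiModel.reval, Set.mem_setOf_eq] at hs ⊢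
      rintro (⟨h1, _⟩ | hc)
      · exact absurd hq (h1 ▸ h)
      · exact hs (Or.inr hc)
  | or φ ψ ihφ ihψ =>
      intro X Y D D' w hXY hD hs
      simp only [FPos.toPAL, PAL.sat] at hs ⊢
      by_cases h1 : PAL.sat (M.reval q X) D w φ.toPAL
      · exact fun ⟨a, _⟩ => a (ihφ X Y D D' w hXY hD h1)
      · by_cases h2 : PAL.sat (M.reval q X) D w ψ.toPAL
        · exact fun ⟨_, b⟩ => b (ihψ X Y D D' w hXY hD h2)
        · exact absurd ⟨h1, h2⟩ hs
  | and φ ψ ihφ ihψ =>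
      intro X Y D D' w hXY hD hs
      exact ⟨ihφ X Y D D' w hXY hD hs.1, ihψ X Y D D' w hXY hD hs.2⟩
  | know a φ ih =>
      intro X Y D D' w hXY hD hs
      intro v hv hr
      exact ih X Y D D' v hXY hD (hs v (hD hv) hr)
  | ann ψ φ ihψ ihφ =>
      intro X Y D D' w hXY hD hs
      simp only [FPos.toPAL, PAL.sat] at hs ⊢
      intro hneg
      have hnegX : ¬ PAL.sat (M.reval q X) D w ψ.toPAL :=
        fun h => hneg (ihψ X Y D D' w hXY hD h)
      have h1 := hs hnegX
      refine ihφ X Y {v ∈ D | ¬ PAL.sat (M.reval q X) D v ψ.toPAL}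
        {v ∈ D' | ¬ PAL.sat (M.reval q Y) D' v ψ.toPAL} w hXY ?_ h1
      rintro v ⟨hvD, hvψ⟩
      exact ⟨hD hvD, fun h => hvψ (ihψ X Y D D' v hXY hD h)⟩

/-- (Proposition 2.) For every formula of the fixpoint positive fragment and every
designated fixpoint variable `q`, the greatest fixpoint `νq.φ` exists on every
epistemic model. -/
theorem stmt_17 {Agent Atom : Type*} (desig : Set Atom) (q : Atom) (hq : q ∈ desig)
    (φ : FPos Agent Atom desig) :
    ∀ M : EpiModel Agent Atom, gfpExists M q φ.toPAL := by
  intro M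
  unfold gfpExists
  set F : Set M.W → Set M.W := fun X => sem (M.reval q X) φ.toPAL with hF
  have hmono : ∀ X Y : Set M.W, X ⊆ Y → F X ⊆ F Y := by
    intro X Y hXY w hw
    exact FPos.mono q hq M φ X Y Set.univ Set.univ w hXY (subset_refl _) hw
  set U : Set M.W := ⋃₀ {X : Set M.W | X ⊆ F X} with hU
  have hUF : U ⊆ F U := by
    rintro w ⟨X, hX, hwX⟩
    exact hmono X U (fun v hv => ⟨X, hX, hv⟩) (hX hwX)
  have hFU : F U ⊆ U := fun w hw => ⟨F U, hmono U (F U) hUF, hw⟩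
  exact subset_antisymm hUF hFU
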